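/- arXiv:cs/0607045 — 6 statements merged into one kernel-verified Lean document; each statement's English description precedes it below -/
import Mathlib

section
/- Suppose nonnegative integers m_2,...,m_7, m_9 satisfy: m_2+m_3+m_4 = 1, m_5+m_6+m_7 ≤ 3, m_6+m_7+m_9 ≤ 5, m_6 ≤ 3, m_9 ≤ 5, and t_3 = 0.65, t_4 = 0.6, t_5 = 0.5, t_6 = 0.4, t_7 = 0.35, t_8 = 1/3, and the squares fit in a unit square so that Σ_{i=2}^{7} t_{i+1}^2 m_i + m_9/16 ≤ 1. Then 1 + m_5/4 + 0.22·m_6 + 0.2·m_7 + 0.0829·m_9 + 1.235·(1 − Σ_{i=2}^{7} t_{i+1}^2 m_i − m_9/16) < 2.1439. -/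
/-- Case 1 of the square-packing analysis with one type 2, 3 or 4 item. -/
theorem stmt_4 (m2 m3 m4 m5 m6 m7 m9 : ℕ)
    (h1 : m2 + m3 + m4 = 1) (h2 : m5 + m6 + m7 ≤ 3) (h3 : m6 + m7 + m9 ≤ 5)
    (h4 : m6 ≤ 3) (h5 : m9 ≤ 5)
    (harea : (0.65 : ℝ) ^ 2 * m2 + 0.6 ^ 2 * m3 + 0.5 ^ 2 * m4 + 0.4 ^ 2 * m5
        + 0.35 ^ 2 * m6 + (1 / 3) ^ 2 * m7 + m9 / 16 ≤ 1) :
    1 + (m5 : ℝ) / 4 + 0.22 * m6 + 0.2 * m7 + 0.0829 * m9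
      + 1.235 * (1 - ((0.65 : ℝ) ^ 2 * m2 + 0.6 ^ 2 * m3 + 0.5 ^ 2 * m4
          + 0.4 ^ 2 * m5 + 0.35 ^ 2 * m6 + (1 / 3) ^ 2 * m7 + m9 / 16))
      < 2.1439 := by
  have c1 : ((m2 : ℝ) + m3 + m4) = 1 := by exact_mod_cast h1
  have c2 : ((m5 : ℝ) + m6 + m7) ≤ 3 := by exact_mod_cast h2
  have c3 : ((m6 : ℝ) + m7 + m9) ≤ 5 := by exact_mod_cast h3
  have c4 : (m6 : ℝ) ≤ 3 := by exact_mod_cast h4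
  have c5 : (m9 : ℝ) ≤ 5 := by exact_mod_cast h5
  have p2 : (0 : ℝ) ≤ m2 := Nat.cast_nonneg _
  have p3 : (0 : ℝ) ≤ m3 := Nat.cast_nonneg _
  have p4 : (0 : ℝ) ≤ m4 := Nat.cast_nonneg _
  have p5 : (0 : ℝ) ≤ m5 := Nat.cast_nonneg _
  have p6 : (0 : ℝ) ≤ m6 := Nat.cast_nonneg _
  have p7 : (0 : ℝ) ≤ m7 := Nat.cast_nonneg _
  have p9 : (0 : ℝ) ≤ m9 := Nat.cast_nonneg _
  nlinarith [c1, c2, c3, c4, c5]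
end

section
/- At most one cube of side length greater than 1/2 can be packed in the unit d-cube, and if a cube of side in (0.5, 0.6] is packed in a unit cube (d = 3), then at most 7 additional cubes of side greater than 1/3 can be packed alongside it. -/
/-- An axis-aligned packing of cubes (given by corner positions and side
lengths) in the unit `d`-cube: every cube fits in the bin, and distinct cubes
have disjoint interiors (they are separated in some coordinate). -/
def Packing (d : ℕ) {ι : Type} (pos : ι → Fin d → ℝ) (side : ι → ℝ) : Prop :=
  (∀ i j, 0 ≤ pos i j ∧ pos i j + side i ≤ 1) ∧
  (∀ i i', i ≠ i' → ∃ j, pos i j + side i ≤ pos i' j ∨ pos i' j + side i' ≤ pos i j)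

private lemma exists_pt (x s : ℝ) (hx : 0 ≤ x) (hxs : x + s ≤ 1) (hs : 1/3 < s) :
    ∃ b : Bool, x < (if b then (2:ℝ)/3 else 1/3) ∧ (if b then (2:ℝ)/3 else 1/3) < x + s := by
  by_cases h : x < 1/3
  · exact ⟨false, by simpa using h, by simp; linarith⟩
  · exact ⟨true, by simp; linarith, by simp; linarith⟩

/-- At most one cube of side greater than `1/2` fits in the unit `d`-cube; and
in dimension 3, alongside a cube of side in `(0.5, 0.6]` at most 7 further
cubes of side greater than `1/3` can be packed. -/
theorem stmt_7 :
    (∀ (d n : ℕ), 1 ≤ d → ∀ (pos : Fin n → Fin d → ℝ) (side : Fin n → ℝ),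
      Packing d pos side → (∀ i, 1 / 2 < side i) → n ≤ 1) ∧
    (∀ (n : ℕ) (pos : Fin (n + 1) → Fin 3 → ℝ) (side : Fin (n + 1) → ℝ),
      Packing 3 pos side →
      0.5 < side 0 → side 0 ≤ 0.6 →
      (∀ i : Fin (n + 1), i ≠ 0 → 1 / 3 < side i) → n ≤ 7) := by
  constructor
  · intro d n hd pos side ⟨hfit, hsep⟩ hbig
    by_contra h
    push_neg at h
    have h2 : 2 ≤ n := h
    obtain ⟨j, hj⟩ := hsep ⟨0, by omega⟩ ⟨1, by omega⟩ (by simp [Fin.ext_iff])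
    set i0 : Fin n := ⟨0, by omega⟩
    set i1 : Fin n := ⟨1, by omega⟩
    have h00 := hfit i0 j
    have h11 := hfit i1 j
    have hb0 := hbig i0
    have hb1 := hbig i1
    rcases hj with hj | hj <;> linarith
  · intro n pos side ⟨hfit, hsep⟩ h05 h06 hrest
    have hall : ∀ i, 1/3 < side i := by
      intro i
      by_cases hi : i = 0
      · subst hi; norm_num at h05 ⊢; linarith
      · exact hrest i hi
    have hpt : ∀ i, ∃ b : Fin 3 → Bool, ∀ j,
        pos i j < (if b j then (2:ℝ)/3 else 1/3) ∧
        (if b j then (2:ℝ)/3 else 1/3) < pos i j + side i := by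
      intro i
      have : ∀ j : Fin 3, ∃ bj : Bool,
          pos i j < (if bj then (2:ℝ)/3 else 1/3) ∧
          (if bj then (2:ℝ)/3 else 1/3) < pos i j + side i := fun j =>
        exists_pt _ _ (hfit i j).1 (hfit i j).2 (hall i)
      exact ⟨fun j => (this j).choose, fun j => (this j).choose_spec⟩
    choose b hb using hpt
    have hinj : Function.Injective b := by
      intro i i' hbb
      by_contra hne
      obtain ⟨j, hj⟩ := hsep i i' hne
      have h1 := hb i j
      have h2 := hb i' j
      rw [hbb] at h1
      rcases hj with hj | hj <;> linarith [h1.1, h1.2, h2.1, h2.2]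
    have := Fintype.card_le_of_injective b hinj
    simp [Fintype.card_fun] at this
    omega
end

section
/- For nonnegative integers m_6, m_7 with m_6 + m_7 ≤ 8 and 0.35^3·m_6 + m_7/27 ≤ 1: 0.11·m_6 + 0.1·m_7 + 1.96·(1 − 0.35^3·m_6 − m_7/27) ≤ 2.3. -/
/-- Cube-packing Case 1 with no large items. -/
theorem stmt_9 (m6 m7 : ℕ) (h1 : m6 + m7 ≤ 8)
    (harea : (0.35 : ℝ) ^ 3 * m6 + m7 / 27 ≤ 1) :
    (0.11 : ℝ) * m6 + 0.1 * m7 + 1.96 * (1 - 0.35 ^ 3 * m6 - (m7 : ℝ) / 27) ≤ 2.3 := by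
  have h1' : (m6 : ℝ) + m7 ≤ 8 := by exact_mod_cast h1
  nlinarith [Nat.cast_nonneg (α := ℝ) m6, Nat.cast_nonneg (α := ℝ) m7]
end

section
/- For nonnegative integers m_6 and m_9 with m_6 ≤ 8, m_6 + m_9 ≤ 27, and 0.35^3·m_6 + m_9/64 ≤ 1: 0.1272·m_6 + 0.04211·m_9 + 2.252·(1 − 0.35^3·m_6 − m_9/64) ≤ 2.63. -/
/-- Cube-packing Case 4 with no items of side exceeding `1/2`. -/
theorem stmt_11 (m6 m9 : ℕ) (h1 : m6 ≤ 8) (h2 : m6 + m9 ≤ 27)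
    (harea : (0.35 : ℝ) ^ 3 * m6 + m9 / 64 ≤ 1) :
    (0.1272 : ℝ) * m6 + 0.04211 * m9
      + 2.252 * (1 - 0.35 ^ 3 * m6 - (m9 : ℝ) / 64) ≤ 2.63 := by
  have hr1 : (m6 : ℝ) ≤ 8 := by exact_mod_cast h1
  have hr2 : (m6 : ℝ) + m9 ≤ 27 := by exact_mod_cast h2
  nlinarith [hr1, hr2]
end

section
/- If a square of side greater than 0.6 is packed in the unit square, then at most 3 squares of side greater than 1/3 and at most 5 squares of side greater than 1/4 can be packed alongside it without overlap. -/
noncomputable def gridIndices (k : ℕ) (x s : ℝ) : Finset ℕ :=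
  {j ∈ Finset.Ioo 0 k | x < j / k ∧ (j : ℝ) / k < x + s}

/-- `⌊x k⌋ + 1, …, ⌊x k⌋ + m` are grid indices of `(x, x + s)`. -/
lemma le_card_gridIndices {k m : ℕ} {x s : ℝ} (hx : 0 ≤ x) (hxs : x + s ≤ 1)
    (hm : (m : ℝ) < k * s) : m ≤ (gridIndices k x s).card := by
  have hk : (0 : ℝ) < k := by
    have hks : 0 < (k : ℝ) * s := m.cast_nonneg.trans_lt hm
    rcases k.eq_zero_or_pos with rfl | hk
    · simp at hks
    · exact_mod_cast hk
  have h_floor_le : (⌊x * k⌋₊ : ℝ) ≤ x * k := Nat.floor_le (by positivity)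
  have h_lt_floor : x * k < ⌊x * k⌋₊ + 1 := Nat.lt_floor_add_one _
  calc m = (Finset.range m).card := (Finset.card_range m).symm
    _ ≤ (gridIndices k x s).card := by
      refine Finset.card_le_card_of_injOn (fun t => ⌊x * k⌋₊ + 1 + t) ?_ ?_
      · intro t ht
        have ht : (t : ℝ) + 1 ≤ m := by exact_mod_cast Finset.mem_range.mp ht
        have h_lo : x * k < ↑(⌊x * k⌋₊ + 1 + t) := by push_cast; linarith [t.cast_nonneg (α := ℝ)]
        have h_hi : (↑(⌊x * k⌋₊ + 1 + t) : ℝ) < (x + s) * k := by push_cast; linarith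
        have h_lt_k : (↑(⌊x * k⌋₊ + 1 + t) : ℝ) < k := by nlinarith
        simp only [gridIndices, Finset.mem_coe, Finset.mem_filter, Finset.mem_Ioo]
        refine ⟨⟨by omega, by exact_mod_cast h_lt_k⟩, ?_, ?_⟩
        · rwa [lt_div_iff₀ hk]
        · rwa [div_lt_iff₀ hk]
      · exact (add_right_injective _).injOn

noncomputable def gridPoints {d : ℕ} (k : ℕ) (x : Fin d → ℝ) (s : ℝ) : Finset (Fin d → ℕ) :=
  Fintype.piFinset fun c => gridIndices k (x c) s

lemma pow_le_card_gridPoints {d k m : ℕ} {x : Fin d → ℝ} {s : ℝ}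
    (hx : ∀ c, 0 ≤ x c ∧ x c + s ≤ 1) (hm : (m : ℝ) < k * s) :
    m ^ d ≤ (gridPoints k x s).card := by
  rw [gridPoints, Fintype.card_piFinset]
  calc m ^ d = ∏ _c : Fin d, m := by simp
    _ ≤ ∏ c, (gridIndices k (x c) s).card :=
      Finset.prod_le_prod' fun c _ => le_card_gridIndices (hx c).1 (hx c).2 hm

lemma gridPoints_subset {d : ℕ} (k : ℕ) (x : Fin d → ℝ) (s : ℝ) :
    gridPoints k x s ⊆ Fintype.piFinset fun _ => Finset.Ioo 0 k :=
  Fintype.piFinset_subset _ _ fun _ => Finset.filter_subset _ _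

namespace Packing

variable {d : ℕ} {ι : Type} {pos : ι → Fin d → ℝ} {side : ι → ℝ}

lemma disjoint_gridPoints (hP : Packing d pos side) (k : ℕ) {i i' : ι} (hne : i ≠ i') :
    Disjoint (gridPoints k (pos i) (side i)) (gridPoints k (pos i') (side i')) := by
  rw [Finset.disjoint_left]
  intro p hp hp'
  obtain ⟨c, hc⟩ := hP.2 i i' hne
  simp only [gridPoints, Fintype.mem_piFinset, gridIndices, Finset.mem_filter] at hp hp'
  rcases hc with hc | hc <;> linarith [(hp c).2.1, (hp c).2.2, (hp' c).2.1, (hp' c).2.2]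

theorem sum_pow_le [Fintype ι] (hP : Packing d pos side) (k : ℕ) (m : ι → ℕ)
    (hm : ∀ i, (m i : ℝ) < k * side i) : ∑ i, m i ^ d ≤ (k - 1) ^ d := by
  classical
  calc ∑ i, m i ^ d ≤ ∑ i, (gridPoints k (pos i) (side i)).card :=
        Finset.sum_le_sum fun i _ => pow_le_card_gridPoints (hP.1 i) (hm i)
    _ = (Finset.univ.biUnion fun i => gridPoints k (pos i) (side i)).card :=
        (Finset.card_biUnion fun i _ i' _ hne => hP.disjoint_gridPoints k hne).symm
    _ ≤ (Fintype.piFinset fun _ : Fin d => Finset.Ioo 0 k).card :=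
        Finset.card_le_card (Finset.biUnion_subset.mpr fun i _ => gridPoints_subset _ _ _)
    _ = (k - 1) ^ d := by simp

end Packing

/-- If a square of side greater than `0.6` is packed in the unit square, then
at most 3 further squares of side greater than `1/3`, and at most 5 further
squares of side greater than `1/4`, can be packed alongside it. -/
theorem stmt_13 :
    (∀ (n : ℕ) (pos : Fin (n + 1) → Fin 2 → ℝ) (side : Fin (n + 1) → ℝ),
      Packing 2 pos side → 0.6 < side 0 →
      (∀ i : Fin (n + 1), i ≠ 0 → 1 / 3 < side i) → n ≤ 3) ∧
    (∀ (n : ℕ) (pos : Fin (n + 1) → Fin 2 → ℝ) (side : Fin (n + 1) → ℝ),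
      Packing 2 pos side → 0.6 < side 0 →
      (∀ i : Fin (n + 1), i ≠ 0 → 1 / 4 < side i) → n ≤ 5) := by
  constructor
  · intro n pos side hP hbig hsmall
    have h_count : n + 1 ≤ 4 := calc
      n + 1 = ∑ _i : Fin (n + 1), 1 ^ 2 := by simp
      _ ≤ 4 := hP.sum_pow_le 3 (fun _ => 1) fun i => by
        rcases eq_or_ne i 0 with rfl | hi
        · push_cast; linarith
        · push_cast; linarith [hsmall i hi]
    omega
  · intro n pos side hP hbig hsmall
    have h_count : 4 + n ≤ 9 := calc
      4 + n = ∑ i : Fin (n + 1), (Fin.cons 2 fun _ => 1 : Fin (n + 1) → ℕ) i ^ 2 := by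
        simp [Fin.sum_univ_succ]
      _ ≤ 9 := hP.sum_pow_le 4 _ fun i => by
        cases i using Fin.cases with
        | zero => rw [Fin.cons_zero]; push_cast; linarith
        | succ j => rw [Fin.cons_succ]; push_cast; linarith [hsmall j.succ (Fin.succ_ne_zero j)]
    omega
end

section
/- If a cube of side greater than 0.6 is packed in the unit cube [0,1]^3, then at most 7 additional cubes of side greater than 1/3 can be packed alongside it without overlap. -/
/-- If a cube of side greater than `0.6` is packed in the unit cube, at most 7
further cubes of side greater than `1/3` can be packed alongside it. -/
theorem stmt_14 (n : ℕ) (pos : Fin (n + 1) → Fin 3 → ℝ) (side : Fin (n + 1) → ℝ)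
    (hpack : Packing 3 pos side) (h0 : 0.6 < side 0)
    (hbig : ∀ i : Fin (n + 1), i ≠ 0 → 1 / 3 < side i) : n ≤ 7 := by
  obtain ⟨hin, hdisj⟩ := hpack
  have hside : ∀ i, (1 : ℝ) / 3 < side i := by
    intro i
    by_cases h : i = 0
    · subst h; norm_num at h0 ⊢; linarith
    · exact hbig i h
  set g : Fin (n + 1) → Fin 3 → ℝ :=
    fun i j => if pos i j < 1 / 3 then 1 / 3 else 2 / 3 with hg
  have hmem : ∀ i j, pos i j < g i j ∧ g i j < pos i j + side i := by
    intro i j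
    obtain ⟨h1, h2⟩ := hin i j
    have hs := hside i
    by_cases h : pos i j < 1 / 3
    · simp only [hg, if_pos h]
      constructor <;> linarith
    · simp only [hg, if_neg h]
      push_neg at h
      constructor <;> linarith
  have hinj : Function.Injective (fun i => fun j : Fin 3 => decide (pos i j < 1 / 3)) := by
    intro i i' hii
    by_contra hne
    obtain ⟨j, hj⟩ := hdisj i i' hne
    have hgeq : g i j = g i' j := by
      have := congrFun hii j
      simp only [decide_eq_decide] at this
      by_cases h : pos i j < 1 / 3
      · have h' : pos i' j < 1 / 3 := this.mp h
        simp only [hg]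
        rw [if_pos h, if_pos h']
      · have h' : ¬ pos i' j < 1 / 3 := fun hc => h (this.mpr hc)
        simp only [hg]
        rw [if_neg h, if_neg h']
    obtain ⟨a1, a2⟩ := hmem i j
    obtain ⟨b1, b2⟩ := hmem i' j
    rcases hj with h | h <;> linarith [hgeq]
  have := Fintype.card_le_of_injective _ hinj
  simp [Fintype.card_fun] at this
  omega
end
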